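/- arXiv:1709.09985 — 2 statements merged into one kernel-verified Lean document; each statement's English description precedes it below -/
import Mathlib

section
/- Let G be a finite simple graph, R a graph possibly with loops, and (V_u)_{u∈V(R)} a partition of V(G). Suppose u₁ and u₂ are distinct twin nodes of R (every node distinct from both is adjacent to either both or neither of them) such that either u₁ and u₂ are adjacent and both have loops, or u₁ and u₂ are non-adjacent and neither has a loop. Let R' be the graph obtained from R by identifying u₁ and u₂ into a single node w (w is adjacent to exactly the common neighbors of u₁ and u₂ among the remaining nodes, and w has a loop if and only if u₁ and u₂ have loops), and let the partition for R' be obtained by replacing the parts V_{u₁} and V_{u₂} by the single part V_w = V_{u₁} ∪ V_{u₂}. Then G^{R'} = G^R. -/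
/-- The graph `G^R`: given a graph `R` possibly with loops on a node type `ι`
(presented as a relation) and a partition of `V(G)` indexed by the nodes of `R`
(presented as `p : V → ι`, the part `V_u` being `p ⁻¹' {u}`), two distinct
vertices are adjacent in `G^R` iff exactly one of the following holds:
they are adjacent in `G`, or their parts are adjacent in `R`. -/
def SimpleGraph.patternApply {V ι : Type*} (G : SimpleGraph V) (R : ι → ι → Prop)
    (p : V → ι) : SimpleGraph V where
  Adj v w := v ≠ w ∧ Xor' (G.Adj v w) (R (p v) (p w) ∨ R (p w) (p v))
  symm := by
    refine ⟨?_⟩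
    rintro v w ⟨h1, h2⟩
    refine ⟨h1.symm, ?_⟩
    rwa [G.adj_comm, or_comm] at h2
  loopless := ⟨fun v h => h.1 rfl⟩

/-- A pattern: a graph possibly with loops (a symmetric relation on nodes) with
no pair of adjacent twins both having loops and no pair of non-adjacent twins
neither of which has a loop. -/
def IsPattern {ι : Type*} (R : ι → ι → Prop) : Prop :=
  Symmetric R ∧ ∀ u₁ u₂ : ι, u₁ ≠ u₂ →
    (∀ w : ι, w ≠ u₁ → w ≠ u₂ → (R u₁ w ↔ R u₂ w)) →
    ¬((R u₁ u₂ ∧ R u₁ u₁ ∧ R u₂ u₂) ∨ (¬R u₁ u₂ ∧ ¬R u₁ u₁ ∧ ¬R u₂ u₂))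

/-- `G` is `d`-degenerate: the vertices can be linearly ordered (via an injection
into `ℕ`) so that every vertex has at most `d` neighbors preceding it. -/
def SimpleGraph.Degenerate {V : Type*} (G : SimpleGraph V) (d : ℕ) : Prop :=
  ∃ f : V → ℕ, Function.Injective f ∧ ∀ v : V, {w : V | G.Adj v w ∧ f w < f v}.ncard ≤ d

/-- Two sets of vertices are `k`-similar if their symmetric difference has at
most `k` elements. -/
def KSimilar {V : Type*} (k : ℕ) (X Y : Set V) : Prop := (symmDiff X Y).ncard ≤ k

/-- The `k`-similarity graph of `H`: two distinct vertices are adjacent iff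
their neighborhoods are `k`-similar. -/
def simGraph {V : Type*} (H : SimpleGraph V) (k : ℕ) : SimpleGraph V where
  Adj v w := v ≠ w ∧ KSimilar k (H.neighborSet v) (H.neighborSet w)
  symm := by
    refine ⟨?_⟩
    rintro v w ⟨h1, h2⟩
    exact ⟨h1.symm, by rwa [KSimilar, symmDiff_comm]⟩
  loopless := ⟨fun v h => h.1 rfl⟩

/-- The `u`-perfect set: the union of the parts `V_{u'}` over all neighbors
`u'` of `u` in `R`. -/
def perfectSet {V ι : Type*} (R : ι → ι → Prop) (p : V → ι) (u : ι) : Set V :=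
  {v : V | R u (p v)}

/-- A vertex `v` is `(u,k)`-perfect if its neighborhood in `G^R` is `k`-similar
to the `u`-perfect set. -/
def PerfectVtx {V ι : Type*} (G : SimpleGraph V) (R : ι → ι → Prop) (p : V → ι)
    (u : ι) (k : ℕ) (v : V) : Prop :=
  KSimilar k ((G.patternApply R p).neighborSet v) (perfectSet R p u)

/-- Complementing a graph on a subset `S` of its vertices: adjacency between
distinct vertices of `S` is flipped, all other adjacencies are unchanged. -/
def complementOn {V : Type*} (G : SimpleGraph V) (S : Set V) : SimpleGraph V where
  Adj v w := v ≠ w ∧ Xor' (G.Adj v w) (v ∈ S ∧ w ∈ S)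
  symm := by
    refine ⟨?_⟩
    rintro v w ⟨h1, h2⟩
    refine ⟨h1.symm, ?_⟩
    rwa [G.adj_comm, and_comm] at h2
  loopless := ⟨fun v h => h.1 rfl⟩

/-! `G^{R'}` only depends on which pairs of vertices lie in `R`-adjacent parts. Merging `u₂`
into `u₁` relabels parts by `a ↦ if a = u₂ then u₁ else a`, and this preserves `R` as soon as
the rows of `u₁` and `u₂` coincide. The twin property gives that away from `u₁, u₂`; the case
hypothesis is exactly what makes the rows agree at `u₁` and `u₂` as well. -/

theorem SimpleGraph.patternApply_eq_of_iff {V ι κ : Type*} (G : SimpleGraph V)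
    {R : ι → ι → Prop} {R' : κ → κ → Prop} {p : V → ι} {q : V → κ}
    (h : ∀ v w, R' (q v) (q w) ↔ R (p v) (p w)) :
    G.patternApply R' q = G.patternApply R p := by
  ext v w
  simp only [SimpleGraph.patternApply, h]

theorem rel_ite_ite_iff_of_forall_rel_iff {ι : Type*} [DecidableEq ι] {R : ι → ι → Prop}
    [Std.Symm R] {u₁ u₂ : ι} (hrow : ∀ b, R u₁ b ↔ R u₂ b) (a b : ι) :
    R (if a = u₂ then u₁ else a) (if b = u₂ then u₁ else b) ↔ R a b := by
  have hcol : ∀ a, R a u₁ ↔ R a u₂ := fun a => by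
    rw [Std.Symm.iff (r := R) a u₁, Std.Symm.iff (r := R) a u₂]; exact hrow a
  split_ifs with ha hb hb
  · rw [ha, hb, hrow, hcol]
  · rw [ha, hrow]
  · rw [hb, hcol]
  · rfl

theorem rel_left_iff_of_twins {ι : Type*} {R : ι → ι → Prop} [Std.Symm R]
    {u₁ u₂ : ι} (htwin : ∀ w, w ≠ u₁ → w ≠ u₂ → (R u₁ w ↔ R u₂ w))
    (hcase : (R u₁ u₂ ∧ R u₁ u₁ ∧ R u₂ u₂) ∨ (¬R u₁ u₂ ∧ ¬R u₁ u₁ ∧ ¬R u₂ u₂)) (b : ι) :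
    R u₁ b ↔ R u₂ b := by
  have h21 : R u₂ u₁ ↔ R u₁ u₂ := Std.Symm.iff (r := R) u₂ u₁
  by_cases hb₁ : b = u₁
  · subst hb₁; tauto
  by_cases hb₂ : b = u₂
  · subst hb₂; tauto
  exact htwin b hb₁ hb₂

theorem stmt8_general {V ι : Type*} [DecidableEq ι] (G : SimpleGraph V)
    (R : ι → ι → Prop) (hR : Symmetric R) (p : V → ι) (u₁ u₂ : ι) (hne : u₁ ≠ u₂)
    (htwin : ∀ w : ι, w ≠ u₁ → w ≠ u₂ → (R u₁ w ↔ R u₂ w))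
    (hcase : (R u₁ u₂ ∧ R u₁ u₁ ∧ R u₂ u₂) ∨ (¬R u₁ u₂ ∧ ¬R u₁ u₁ ∧ ¬R u₂ u₂)) :
    G.patternApply (fun a b : {x : ι // x ≠ u₂} => R a.1 b.1)
      (fun v => if h : p v = u₂ then ⟨u₁, hne⟩ else ⟨p v, h⟩) = G.patternApply R p := by
  have hmerge : ∀ v, ((if h : p v = u₂ then ⟨u₁, hne⟩ else ⟨p v, h⟩ : {x : ι // x ≠ u₂}) : ι) =
      if p v = u₂ then u₁ else p v := fun v => by split_ifs <;> rfl
  have : Std.Symm R := ⟨fun _ _ h => hR h⟩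
  refine G.patternApply_eq_of_iff fun v w => ?_
  rw [hmerge, hmerge]
  exact rel_ite_ite_iff_of_forall_rel_iff (rel_left_iff_of_twins htwin hcase) _ _

/-- if `u₁ ≠ u₂` are twin nodes of `R` that are either adjacent with both
having loops, or non-adjacent with neither having a loop, then identifying `u₂` with `u₁`
(deleting `u₂`, restricting `R` to the remaining nodes — by the twin property the merged
node `u₁` is adjacent to exactly the common neighbors of `u₁` and `u₂` and has a loop iff
both do) and merging the parts `V_{u₁}` and `V_{u₂}` yields the same graph: `G^{R'} = G^R`. -/
theorem stmt8 {V ι : Type*} [Fintype V] [DecidableEq ι] (G : SimpleGraph V)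
    (R : ι → ι → Prop) (hR : Symmetric R) (p : V → ι) (u₁ u₂ : ι) (hne : u₁ ≠ u₂)
    (htwin : ∀ w : ι, w ≠ u₁ → w ≠ u₂ → (R u₁ w ↔ R u₂ w))
    (hcase : (R u₁ u₂ ∧ R u₁ u₁ ∧ R u₂ u₂) ∨ (¬R u₁ u₂ ∧ ¬R u₁ u₁ ∧ ¬R u₂ u₂)) :
    G.patternApply (fun a b : {x : ι // x ≠ u₂} => R a.1 b.1)
      (fun v => if h : p v = u₂ then ⟨u₁, hne⟩ else ⟨p v, h⟩) = G.patternApply R p :=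
  stmt8_general G R hR p u₁ u₂ hne htwin hcase
end

section
/- Every finite d-degenerate simple graph on n vertices contains at most 2^d · n nonempty vertex subsets that induce complete subgraphs. -/
/-!
Order the vertices so that each has at most `d` earlier neighbours. A nonempty clique is
determined by its last vertex `v` together with the rest of the clique, which is a subset of the
at most `d` earlier neighbours of `v`; hence each vertex is the last vertex of at most `2^d` cliques.
-/

namespace SimpleGraph

variable {V : Type*} (G : SimpleGraph V)

theorem exists_eq_insert_of_isClique {α : Type*} [LinearOrder α] {f : V → α}
    (hf : Function.Injective f) {S : Set V} (hS : S.Finite) (hne : S.Nonempty)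
    (hc : G.IsClique S) : ∃ v, ∃ T ⊆ {w | G.Adj v w ∧ f w < f v}, insert v T = S := by
  obtain ⟨v, hv, hmax⟩ := S.exists_max_image f hS hne
  refine ⟨v, S \ {v}, fun w ⟨hw, hwv⟩ => ⟨hc hv hw (Ne.symm hwv), ?_⟩, ?_⟩
  · exact (hmax w hw).lt_of_ne (hf.ne hwv)
  · rw [Set.insert_sdiff_singleton, Set.insert_eq_of_mem hv]

theorem setOf_nonempty_isClique_subset_iUnion [Finite V] {α : Type*} [LinearOrder α]
    {f : V → α} (hf : Function.Injective f) :
    {S : Set V | S.Nonempty ∧ G.IsClique S} ⊆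
      ⋃ v, insert v '' 𝒫 {w | G.Adj v w ∧ f w < f v} := by
  rintro S ⟨hne, hc⟩
  obtain ⟨v, T, hT, rfl⟩ := G.exists_eq_insert_of_isClique hf S.toFinite hne hc
  exact Set.mem_iUnion.2 ⟨v, T, hT, rfl⟩

end SimpleGraph

/-- a finite `d`-degenerate graph on `n` vertices contains at most
`2^d · n` nonempty vertex subsets inducing complete subgraphs. -/
theorem stmt16 {V : Type*} [Fintype V] (G : SimpleGraph V) (d : ℕ) (h : G.Degenerate d) :
    {S : Set V | S.Nonempty ∧ G.IsClique S}.ncard ≤ 2 ^ d * Fintype.card V := by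
  obtain ⟨f, hf, hdeg⟩ := h
  have hcard (v : V) : (insert v '' 𝒫 {w | G.Adj v w ∧ f w < f v}).ncard ≤ 2 ^ d :=
    calc _ ≤ (𝒫 {w | G.Adj v w ∧ f w < f v}).ncard := Set.ncard_image_le (Set.toFinite _)
      _ = 2 ^ {w | G.Adj v w ∧ f w < f v}.ncard := Set.ncard_powerset _
      _ ≤ 2 ^ d := Nat.pow_le_pow_right two_pos (hdeg v)
  calc _ ≤ (⋃ v, insert v '' 𝒫 {w | G.Adj v w ∧ f w < f v}).ncard :=
        Set.ncard_le_ncard (G.setOf_nonempty_isClique_subset_iUnion hf) (Set.toFinite _)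
    _ ≤ ∑ v, (insert v '' 𝒫 {w | G.Adj v w ∧ f w < f v}).ncard :=
        Set.ncard_iUnion_le_of_fintype _
    _ ≤ ∑ _v : V, 2 ^ d := Finset.sum_le_sum fun v _ => hcard v
    _ = 2 ^ d * Fintype.card V := by rw [Finset.sum_const, Finset.card_univ, smul_eq_mul, mul_comm]
end
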